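/- The ring of ℤ/k-invariant real polynomial functions on ℂ ≅ ℝ², where the generator acts by z ↦ e^{2πi/k}·z, is generated by σ₁(z) = Re(z^k), σ₂(z) = Im(z^k), and σ₃(z) = |z|². -/
import Mathlib


open Complex

/-- p : ℂ → ℝ is a real polynomial function on ℂ ≅ ℝ². -/
def IsRealPolyFun (p : ℂ → ℝ) : Prop :=
  ∃ P : MvPolynomial (Fin 2) ℝ, ∀ z : ℂ, p z = MvPolynomial.eval ![z.re, z.im] P

/-- p is invariant under the cyclic group ℤ/k acting on ℂ by z ↦ e^{2πi/k}·z. -/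
def IsCyclicInvariant (k : ℕ) (p : ℂ → ℝ) : Prop :=
  ∀ z : ℂ, p (Complex.exp (2 * Real.pi * Complex.I / k) * z) = p z

section Aux

open MvPolynomial

lemma rpf_add {p q : ℂ → ℝ} (hp : IsRealPolyFun p) (hq : IsRealPolyFun q) :
    IsRealPolyFun (fun z => p z + q z) := by
  obtain ⟨P, hP⟩ := hp; obtain ⟨Q, hQ⟩ := hq
  exact ⟨P + Q, fun z => by simp [hP z, hQ z]⟩

lemma rpf_mul {p q : ℂ → ℝ} (hp : IsRealPolyFun p) (hq : IsRealPolyFun q) :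
    IsRealPolyFun (fun z => p z * q z) := by
  obtain ⟨P, hP⟩ := hp; obtain ⟨Q, hQ⟩ := hq
  exact ⟨P * Q, fun z => by simp [hP z, hQ z]⟩

lemma rpf_sub {p q : ℂ → ℝ} (hp : IsRealPolyFun p) (hq : IsRealPolyFun q) :
    IsRealPolyFun (fun z => p z - q z) := by
  obtain ⟨P, hP⟩ := hp; obtain ⟨Q, hQ⟩ := hq
  exact ⟨P - Q, fun z => by simp [hP z, hQ z]⟩

lemma rpf_const (c : ℝ) : IsRealPolyFun (fun _ => c) := ⟨C c, fun z => by simp⟩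

lemma rpf_re : IsRealPolyFun (fun z => z.re) := ⟨X 0, fun z => by simp⟩

lemma rpf_im : IsRealPolyFun (fun z => z.im) := ⟨X 1, fun z => by simp⟩

lemma rpf_pow (k : ℕ) :
    IsRealPolyFun (fun z => (z ^ k).re) ∧ IsRealPolyFun (fun z => (z ^ k).im) := by
  induction k with
  | zero => simpa using ⟨rpf_const 1, rpf_const 0⟩
  | succ n ih =>
    constructor
    · have h : (fun z : ℂ => (z ^ (n + 1)).re)
          = fun z => (z ^ n).re * z.re - (z ^ n).im * z.im := by
        funext z; rw [pow_succ, Complex.mul_re]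
      rw [h]
      exact rpf_sub (rpf_mul ih.1 rpf_re) (rpf_mul ih.2 rpf_im)
    · have h : (fun z : ℂ => (z ^ (n + 1)).im)
          = fun z => (z ^ n).re * z.im + (z ^ n).im * z.re := by
        funext z; rw [pow_succ, Complex.mul_im]
      rw [h]
      exact rpf_add (rpf_mul ih.1 rpf_im) (rpf_mul ih.2 rpf_re)

lemma rpf_normSq : IsRealPolyFun (fun z => Complex.normSq z) := by
  have h : (fun z : ℂ => Complex.normSq z) = fun z => z.re * z.re + z.im * z.im := by
    funext z; rw [Complex.normSq_apply]
  rw [h]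
  exact rpf_add (rpf_mul rpf_re rpf_re) (rpf_mul rpf_im rpf_im)

lemma pow_aux (a : ℂ) (ha : a ≠ 0) (j d0 d1 : ℕ) :
    (a ^ j) ^ d0 * ((a⁻¹) ^ j) ^ d1 = (a ^ ((d0 : ℤ) - d1)) ^ j := by
  rw [← pow_mul, ← pow_mul, inv_pow, ← zpow_natCast a (j * d0), ← zpow_natCast a (j * d1),
    ← zpow_neg, ← zpow_add₀ ha, ← zpow_natCast (a ^ ((d0 : ℤ) - d1)) j, ← zpow_mul]
  congr 1
  push_cast
  ring

lemma geom_aux (k : ℕ) (ω : ℂ) (hprim : IsPrimitiveRoot ω k) (m : ℤ) :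
    (∑ j ∈ Finset.range k, (ω ^ m) ^ j) = if (k : ℤ) ∣ m then (k : ℂ) else 0 := by
  by_cases h : (k : ℤ) ∣ m
  · rw [if_pos h, (hprim.zpow_eq_one_iff_dvd m).2 h]
    simp
  · rw [if_neg h, geom_sum_eq (fun h1 => h ((hprim.zpow_eq_one_iff_dvd m).1 h1)) k]
    have h2 : (ω ^ m) ^ (k : ℤ) = 1 := by
      rw [← zpow_mul, mul_comm, zpow_mul, zpow_natCast, hprim.pow_eq_one, one_zpow]
    rw [← zpow_natCast (ω ^ m) k, h2, sub_self, zero_div]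

/-- The basic monomial building blocks in the three generators. -/
noncomputable def Mon (k d0 d1 : ℕ) : MvPolynomial (Fin 3) ℂ :=
  X 2 ^ (min d0 d1) *
    (if d1 ≤ d0 then (X 0 + C I * X 1) ^ ((d0 - d1) / k) else (X 0 - C I * X 1) ^ ((d1 - d0) / k))

lemma eval_Mon (k : ℕ) (z : ℂ) (d0 d1 : ℕ) (hdvd : (k : ℤ) ∣ ((d0 : ℤ) - d1)) :
    MvPolynomial.eval (fun i => ((![(z ^ k).re, (z ^ k).im, Complex.normSq z] i : ℝ) : ℂ))
      (Mon k d0 d1) = z ^ d0 * (starRingEnd ℂ) z ^ d1 := by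
  have hz : ((Complex.normSq z : ℝ) : ℂ) = z * (starRingEnd ℂ) z := (Complex.mul_conj z).symm
  have hre : (((z ^ k).re : ℝ) : ℂ) + I * (((z ^ k).im : ℝ) : ℂ) = z ^ k := by
    rw [mul_comm, re_add_im]
  have him : (((z ^ k).re : ℝ) : ℂ) - I * (((z ^ k).im : ℝ) : ℂ) = (starRingEnd ℂ) z ^ k := by
    have him' : (((z ^ k).re : ℝ) : ℂ) - I * (((z ^ k).im : ℝ) : ℂ)
        = (starRingEnd ℂ) (z ^ k) := by
      apply Complex.ext <;>
        simp only [Complex.sub_re, Complex.sub_im, Complex.ofReal_re, Complex.ofReal_im,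
          Complex.mul_re, Complex.mul_im, Complex.I_re, Complex.I_im, Complex.conj_re,
          Complex.conj_im] <;> ring
    rw [him', map_pow]
  rw [Mon]
  by_cases h : d1 ≤ d0
  · have hdvd' : k ∣ d0 - d1 := by
      have h2 : ((d0 - d1 : ℕ) : ℤ) = (d0 : ℤ) - d1 := by push_cast [Nat.cast_sub h]; ring
      exact_mod_cast h2 ▸ hdvd
    have hq : k * ((d0 - d1) / k) = d0 - d1 := Nat.mul_div_cancel' hdvd'
    rw [if_pos h, min_eq_right h]
    simp only [map_mul, map_pow, map_add, eval_X, eval_C, Matrix.cons_val_zero,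
      Matrix.cons_val_one, Matrix.head_cons, Matrix.cons_val_two, Matrix.tail_cons]
    rw [hre, hz, mul_pow, ← pow_mul, hq,
      show z ^ d1 * (starRingEnd ℂ) z ^ d1 * z ^ (d0 - d1)
        = z ^ d1 * z ^ (d0 - d1) * (starRingEnd ℂ) z ^ d1 from by ring,
      ← pow_add, Nat.add_sub_cancel' h]
  · have h' : d0 ≤ d1 := le_of_not_ge h
    have hdvd2 : (k : ℤ) ∣ (d1 : ℤ) - d0 := by
      have h3 := dvd_neg.mpr hdvd
      rwa [neg_sub] at h3
    have hdvd' : k ∣ d1 - d0 := by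
      have h2 : ((d1 - d0 : ℕ) : ℤ) = (d1 : ℤ) - d0 := by push_cast [Nat.cast_sub h']; ring
      exact_mod_cast h2 ▸ hdvd2
    have hq : k * ((d1 - d0) / k) = d1 - d0 := Nat.mul_div_cancel' hdvd'
    rw [if_neg h, min_eq_left h']
    simp only [map_mul, map_pow, map_sub, eval_X, eval_C, Matrix.cons_val_zero,
      Matrix.cons_val_one, Matrix.head_cons, Matrix.cons_val_two, Matrix.tail_cons]
    rw [him, hz, mul_pow, ← pow_mul, hq,
      show z ^ d0 * (starRingEnd ℂ) z ^ d0 * (starRingEnd ℂ) z ^ (d1 - d0)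
        = z ^ d0 * ((starRingEnd ℂ) z ^ d0 * (starRingEnd ℂ) z ^ (d1 - d0)) from by ring,
      ← pow_add, Nat.add_sub_cancel' h']

/-- Complexification: a real polynomial function is a complex polynomial in z and conj z. -/
lemma exists_F (P : MvPolynomial (Fin 2) ℝ) :
    ∃ F : MvPolynomial (Fin 2) ℂ, ∀ z : ℂ,
      ((MvPolynomial.eval ![z.re, z.im] P : ℝ) : ℂ)
        = MvPolynomial.eval ![z, (starRingEnd ℂ) z] F := by
  refine ⟨eval₂ ((C : ℂ →+* MvPolynomial (Fin 2) ℂ).comp Complex.ofRealHom)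
    ![C (1/2) * (X 0 + X 1), C (-(I/2)) * (X 0 - X 1)] P, fun z => ?_⟩
  rw [show ((MvPolynomial.eval ![z.re, z.im] P : ℝ) : ℂ)
      = Complex.ofRealHom (eval₂ (RingHom.id ℝ) ![z.re, z.im] P) from rfl,
    eval₂_comp_left Complex.ofRealHom (RingHom.id ℝ) ![z.re, z.im] P,
    show MvPolynomial.eval ![z, (starRingEnd ℂ) z]
        (eval₂ ((C : ℂ →+* MvPolynomial (Fin 2) ℂ).comp Complex.ofRealHom) _ P)
      = eval₂ ((MvPolynomial.eval ![z, (starRingEnd ℂ) z]).comp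
          ((C : ℂ →+* MvPolynomial (Fin 2) ℂ).comp Complex.ofRealHom))
          ((MvPolynomial.eval ![z, (starRingEnd ℂ) z]) ∘
            ![C (1/2) * (X 0 + X 1), C (-(I/2)) * (X 0 - X 1)]) P from
      eval₂_comp_left _ _ _ P]
  congr 1
  · ext r; simp
  · funext i
    fin_cases i
    · show ((z.re : ℝ) : ℂ)
          = MvPolynomial.eval ![z, (starRingEnd ℂ) z] (C (1/2) * (X 0 + X 1))
      simp only [map_mul, map_add, eval_C, eval_X, Matrix.cons_val_zero, Matrix.cons_val_one,
        Matrix.head_cons]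
      rw [Complex.add_conj]
      push_cast
      ring
    · show ((z.im : ℝ) : ℂ)
          = MvPolynomial.eval ![z, (starRingEnd ℂ) z] (C (-(I/2)) * (X 0 - X 1))
      simp only [map_mul, map_sub, eval_C, eval_X, Matrix.cons_val_zero, Matrix.cons_val_one,
        Matrix.head_cons]
      rw [Complex.sub_conj]
      push_cast
      linear_combination (z.im : ℂ) * Complex.I_sq

end Aux

/-- The ring of ℤ/k-invariant real polynomial functions on ℂ is generated by
σ₁(z) = Re(z^k), σ₂(z) = Im(z^k), and σ₃(z) = |z|²: each σᵢ is an invariant polynomial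
function, and every invariant polynomial function is a polynomial in σ₁, σ₂, σ₃. -/
theorem cyclic_invariant_polynomials (k : ℕ) (hk : 0 < k) :
    (IsRealPolyFun (fun z => (z ^ k).re) ∧ IsCyclicInvariant k (fun z => (z ^ k).re)) ∧
    (IsRealPolyFun (fun z => (z ^ k).im) ∧ IsCyclicInvariant k (fun z => (z ^ k).im)) ∧
    (IsRealPolyFun (fun z => Complex.normSq z) ∧
      IsCyclicInvariant k (fun z => Complex.normSq z)) ∧
    (∀ p : ℂ → ℝ, IsRealPolyFun p → IsCyclicInvariant k p →
      ∃ Q : MvPolynomial (Fin 3) ℝ,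
        ∀ z : ℂ, p z = MvPolynomial.eval ![(z ^ k).re, (z ^ k).im, Complex.normSq z] Q) := by
  have hkne : (k : ℂ) ≠ 0 := Nat.cast_ne_zero.mpr hk.ne'
  set ω : ℂ := Complex.exp (2 * Real.pi * Complex.I / k) with hωdef
  have hωk : ω ^ k = 1 := by
    rw [hωdef, ← Complex.exp_nat_mul, mul_div_cancel₀ _ hkne]
    exact Complex.exp_two_pi_mul_I
  have hωne : ω ≠ 0 := Complex.exp_ne_zero _
  have hconj : (starRingEnd ℂ) ω = ω⁻¹ := by
    rw [hωdef, ← Complex.exp_conj, ← Complex.exp_neg]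
    congr 1
    simp [map_div₀, Complex.conj_I, map_ofNat]
    ring
  have hprim : IsPrimitiveRoot ω k := Complex.isPrimitiveRoot_exp k hk.ne'
  refine ⟨⟨(rpf_pow k).1, ?_⟩, ⟨(rpf_pow k).2, ?_⟩, ⟨rpf_normSq, ?_⟩, ?_⟩
  · intro z
    show ((ω * z) ^ k).re = (z ^ k).re
    rw [mul_pow, hωk, one_mul]
  · intro z
    show ((ω * z) ^ k).im = (z ^ k).im
    rw [mul_pow, hωk, one_mul]
  · intro z
    show Complex.normSq (ω * z) = Complex.normSq z
    have h1 : ((Complex.normSq ω : ℝ) : ℂ) = 1 := by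
      rw [← Complex.mul_conj, hconj, mul_inv_cancel₀ hωne]
    have h2 : Complex.normSq ω = 1 := by exact_mod_cast h1
    rw [map_mul, h2, one_mul]
  · intro p hp hinv
    obtain ⟨P, hP⟩ := hp
    obtain ⟨F, hF⟩ := exists_F P
    have hFz : ∀ z : ℂ, ((p z : ℝ) : ℂ) = MvPolynomial.eval ![z, (starRingEnd ℂ) z] F := by
      intro z; rw [hP z]; exact hF z
    have hinv' : ∀ z, p (ω * z) = p z := hinv
    have hinvj : ∀ (j : ℕ) (z : ℂ), p (ω ^ j * z) = p z := by
      intro j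
      induction j with
      | zero => intro z; rw [pow_zero, one_mul]
      | succ n ih => intro z; rw [pow_succ, mul_comm (ω ^ n) ω, mul_assoc, hinv', ih]
    set R : MvPolynomial (Fin 3) ℂ :=
      ∑ d ∈ F.support, MvPolynomial.C (MvPolynomial.coeff d F) *
        (if (k : ℤ) ∣ ((d 0 : ℤ) - (d 1 : ℤ)) then Mon k (d 0) (d 1) else 0) with hR
    refine ⟨∑ d ∈ R.support, MvPolynomial.monomial d ((MvPolynomial.coeff d R).re), fun z => ?_⟩
    have key : ((p z : ℝ) : ℂ)
        = MvPolynomial.eval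
            (fun i => ((![(z ^ k).re, (z ^ k).im, Complex.normSq z] i : ℝ) : ℂ)) R := by
      apply mul_left_cancel₀ hkne
      calc (k : ℂ) * ((p z : ℝ) : ℂ)
          = ∑ j ∈ Finset.range k, ((p (ω ^ j * z) : ℝ) : ℂ) := by
            rw [Finset.sum_congr rfl
              (fun j _ => by rw [hinvj j z] : ∀ j ∈ Finset.range k,
                ((p (ω ^ j * z) : ℝ) : ℂ) = ((p z : ℝ) : ℂ)),
              Finset.sum_const, Finset.card_range, nsmul_eq_mul]
        _ = ∑ j ∈ Finset.range k,
              MvPolynomial.eval ![ω ^ j * z, (starRingEnd ℂ) (ω ^ j * z)] F :=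
            Finset.sum_congr rfl fun j _ => hFz _
        _ = ∑ j ∈ Finset.range k, ∑ d ∈ F.support,
              (MvPolynomial.coeff d F * (z ^ d 0 * (starRingEnd ℂ) z ^ d 1))
                * (ω ^ ((d 0 : ℤ) - (d 1 : ℤ))) ^ j := by
            refine Finset.sum_congr rfl fun j _ => ?_
            rw [MvPolynomial.eval_eq']
            refine Finset.sum_congr rfl fun d _ => ?_
            rw [Fin.prod_univ_two]
            simp only [Matrix.cons_val_zero, Matrix.cons_val_one, Matrix.head_cons]
            rw [map_mul, map_pow, hconj, mul_pow, mul_pow,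
              show (ω ^ j) ^ d 0 * z ^ d 0 * ((ω⁻¹ ^ j) ^ d 1 * (starRingEnd ℂ) z ^ d 1)
                = ((ω ^ j) ^ d 0 * (ω⁻¹ ^ j) ^ d 1) * (z ^ d 0 * (starRingEnd ℂ) z ^ d 1)
                from by ring,
              pow_aux ω hωne j (d 0) (d 1)]
            ring
        _ = ∑ d ∈ F.support, (MvPolynomial.coeff d F * (z ^ d 0 * (starRingEnd ℂ) z ^ d 1))
              * (∑ j ∈ Finset.range k, (ω ^ ((d 0 : ℤ) - (d 1 : ℤ))) ^ j) := by
            rw [Finset.sum_comm]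
            exact Finset.sum_congr rfl fun d _ => by rw [Finset.mul_sum]
        _ = (k : ℂ) * MvPolynomial.eval
              (fun i => ((![(z ^ k).re, (z ^ k).im, Complex.normSq z] i : ℝ) : ℂ)) R := by
            rw [hR, map_sum, Finset.mul_sum]
            refine Finset.sum_congr rfl fun d _ => ?_
            rw [geom_aux k ω hprim]
            by_cases hd : (k : ℤ) ∣ ((d 0 : ℤ) - (d 1 : ℤ))
            · rw [if_pos hd, if_pos hd, map_mul, MvPolynomial.eval_C,
                eval_Mon k z (d 0) (d 1) hd]
              ring
            · rw [if_neg hd, if_neg hd]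
              simp
    have hQ : MvPolynomial.eval ![(z ^ k).re, (z ^ k).im, Complex.normSq z]
        (∑ d ∈ R.support, MvPolynomial.monomial d ((MvPolynomial.coeff d R).re))
        = (MvPolynomial.eval
            (fun i => ((![(z ^ k).re, (z ^ k).im, Complex.normSq z] i : ℝ) : ℂ)) R).re := by
      rw [map_sum (MvPolynomial.eval ![(z ^ k).re, (z ^ k).im, Complex.normSq z]),
        MvPolynomial.eval_eq
          (fun i => ((![(z ^ k).re, (z ^ k).im, Complex.normSq z] i : ℝ) : ℂ)) R,
        Complex.re_sum]
      refine Finset.sum_congr rfl fun d _ => ?_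
      rw [MvPolynomial.eval_monomial]
      have hprod : (∏ i ∈ d.support,
            (fun i => ((![(z ^ k).re, (z ^ k).im, Complex.normSq z] i : ℝ) : ℂ)) i ^ d i)
          = (((∏ i ∈ d.support,
              ![(z ^ k).re, (z ^ k).im, Complex.normSq z] i ^ d i : ℝ)) : ℂ) := by
        push_cast
        rfl
      rw [hprod, mul_comm (MvPolynomial.coeff d R), Complex.re_ofReal_mul, mul_comm]
      rfl
    rw [hQ, ← key, Complex.ofReal_re]
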